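/- arXiv:1012.1056 — 5 statements merged into one kernel-verified Lean document; each statement's English description precedes it below -/
import Mathlib

section
/- (Protasov–Saryev criterion, 'easy' direction) Let G be a topological group such that for every subset A ⊆ G and every neighbourhood V of the identity there exists a neighbourhood U of the identity with UA ⊆ AV. Then every bounded right uniformly continuous real-valued function on G is left uniformly continuous. -/
/-!
Fix `ε > 0` and a neighbourhood `W` of `1` with `|f x - f y| < ε / 2` whenever `x * y⁻¹ ∈ W`.
Applied to the level set `A = {x | t < f x}` (in its inverted form `A * U ⊆ W * A`), the hypothesis
shows that moving right by `U` out of `A` lowers `f` by at most `ε / 2` below `t`. Since `f` is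
bounded, finitely many levels `t`, spaced `ε / 2` apart, suffice; intersecting their
neighbourhoods gives a single `V` with `f x - ε < f (x * u)` for `u ∈ V`, and symmetrising `V`
yields left uniform continuity.
-/

open scoped Pointwise Topology

open Filter

theorem exists_nhds_one_mul_subset_mul_of_forall {G : Type*} [Group G] [TopologicalSpace G]
    [IsTopologicalGroup G]
    (h : ∀ A : Set G, ∀ V ∈ 𝓝 (1 : G), ∃ U ∈ 𝓝 (1 : G), U * A ⊆ A * V)
    (A : Set G) {V : Set G} (hV : V ∈ 𝓝 (1 : G)) : ∃ U ∈ 𝓝 (1 : G), A * U ⊆ V * A := by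
  obtain ⟨U, hU, hUA⟩ := h A⁻¹ V⁻¹ (inv_mem_nhds_one G hV)
  refine ⟨U⁻¹, inv_mem_nhds_one G hU, ?_⟩
  rw [← Set.inv_subset_inv, mul_inv_rev, mul_inv_rev, inv_inv]
  exact hUA

theorem Real.exists_finset_forall_lt_le_add (C : ℝ) {δ : ℝ} (hδ : 0 < δ) :
    ∃ S : Finset ℝ, ∀ r, |r| ≤ C → ∃ t ∈ S, t < r ∧ r ≤ t + δ := by
  refine ⟨(Finset.Icc ⌈-C / δ⌉ ⌈C / δ⌉).image fun m : ℤ => δ * (m - 1), fun r hr => ?_⟩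
  obtain ⟨hr₁, hr₂⟩ := abs_le.mp hr
  refine ⟨δ * (⌈r / δ⌉ - 1), Finset.mem_image_of_mem _ ?_, ?_, ?_⟩
  · exact Finset.mem_Icc.mpr ⟨Int.ceil_mono (by gcongr), Int.ceil_mono (by gcongr)⟩
  · have := mul_lt_mul_of_pos_left (Int.ceil_lt_add_one (r / δ)) hδ
    rw [mul_add, mul_div_cancel₀ r hδ.ne'] at this
    linarith
  · have := mul_le_mul_of_nonneg_left (Int.le_ceil (r / δ)) hδ.le
    rw [mul_div_cancel₀ r hδ.ne'] at this
    linarith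

section

variable {G : Type*} [Group G] [TopologicalSpace G] {f : G → ℝ} {δ : ℝ}

theorem exists_nhds_one_lt_apply_mul_of_lt
    (h : ∀ A : Set G, ∀ V ∈ 𝓝 (1 : G), ∃ U ∈ 𝓝 (1 : G), A * U ⊆ V * A)
    {W : Set G} (hW : W ∈ 𝓝 (1 : G)) (hfW : ∀ x y, x * y⁻¹ ∈ W → |f x - f y| < δ) (t : ℝ) :
    ∃ U ∈ 𝓝 (1 : G), ∀ x, t < f x → ∀ u ∈ U, t - δ < f (x * u) := by
  obtain ⟨U, hU, hUA⟩ := h {x | t < f x} W hW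
  refine ⟨U, hU, fun x hx u hu => ?_⟩
  obtain ⟨w, hw, a, ha, hwa⟩ := hUA (Set.mul_mem_mul hx hu)
  have : x * u * a⁻¹ ∈ W := by rwa [← hwa, mul_inv_cancel_right]
  linarith [(abs_sub_lt_iff.mp (hfW _ _ this)).2, show t < f a from ha]

theorem exists_nhds_one_sub_lt_apply_mul {C : ℝ} (hC : ∀ x, |f x| ≤ C) (hδ : 0 < δ)
    (hlevel : ∀ t : ℝ, ∃ U ∈ 𝓝 (1 : G), ∀ x, t < f x → ∀ u ∈ U, t - δ < f (x * u)) :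
    ∃ V ∈ 𝓝 (1 : G), ∀ x, ∀ u ∈ V, f x - 2 * δ < f (x * u) := by
  choose U hU hUf using hlevel
  obtain ⟨S, hS⟩ := Real.exists_finset_forall_lt_le_add C hδ
  refine ⟨⋂ t ∈ S, U t, (biInter_finset_mem S).mpr fun t _ => hU t, fun x u hu => ?_⟩
  obtain ⟨t, htS, htx, hxt⟩ := hS (f x) (hC x)
  have := hUf t x htx u (Set.mem_iInter₂.mp hu t htS)
  linarith

theorem exists_nhds_one_abs_sub_lt_of_sub_lt_apply_mul [IsTopologicalGroup G] {ε : ℝ}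
    (hV : ∃ V ∈ 𝓝 (1 : G), ∀ x, ∀ u ∈ V, f x - ε < f (x * u)) :
    ∃ V ∈ 𝓝 (1 : G), ∀ x y, x⁻¹ * y ∈ V → |f x - f y| < ε := by
  obtain ⟨V, hV, hVf⟩ := hV
  refine ⟨V ∩ V⁻¹, inter_mem hV (inv_mem_nhds_one G hV), fun x y hxy => ?_⟩
  have hy := hVf x _ hxy.1
  have hx := hVf y _ (Set.mem_inv.mp hxy.2)
  rw [mul_inv_cancel_left] at hy
  rw [mul_inv_rev, inv_inv, mul_inv_cancel_left] at hx
  exact abs_sub_lt_iff.mpr ⟨by linarith, by linarith⟩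

end

theorem protasov_saryev_easy
    {G : Type*} [Group G] [TopologicalSpace G] [IsTopologicalGroup G]
    (h : ∀ A : Set G, ∀ V ∈ nhds (1 : G), ∃ U ∈ nhds (1 : G), U * A ⊆ A * V)
    (f : G → ℝ) (hb : ∃ C : ℝ, ∀ x : G, |f x| ≤ C)
    (hruc : ∀ ε > (0 : ℝ), ∃ V ∈ nhds (1 : G),
      ∀ x y : G, x * y⁻¹ ∈ V → |f x - f y| < ε) :
    ∀ ε > (0 : ℝ), ∃ V ∈ nhds (1 : G),
      ∀ x y : G, x⁻¹ * y ∈ V → |f x - f y| < ε := by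
  intro ε hε
  obtain ⟨C, hC⟩ := hb
  obtain ⟨W, hW, hfW⟩ := hruc (ε / 2) (half_pos hε)
  have hlevel := exists_nhds_one_lt_apply_mul_of_lt
    (exists_nhds_one_mul_subset_mul_of_forall h) hW hfW
  apply exists_nhds_one_abs_sub_lt_of_sub_lt_apply_mul
  simpa only [mul_div_cancel₀ ε two_ne_zero] using
    exists_nhds_one_sub_lt_apply_mul hC (half_pos hε) hlevel
end

section
/- Let G be a topological group such that for every left uniformly discrete subset A ⊆ G and every neighbourhood V of the identity there is a neighbourhood U of the identity with UA ⊆ AV. Then the same conclusion holds for every subset A ⊆ G: for every A ⊆ G and every neighbourhood V of the identity there is a neighbourhood U of the identity with UA ⊆ AV. -/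
open scoped Pointwise
open Set

/-!
Pick neighbourhoods of the identity with `W₁ W₁ ⊆ V` and `W W⁻¹ ⊆ W₁`. By Zorn, `A` contains a
maximal subset `B` whose translates `bW` are pairwise disjoint; `B` is left uniformly discrete and,
by maximality, `A ⊆ B W W⁻¹ ⊆ B W₁`. The hypothesis gives `U B ⊆ B W₁`, hence
`U A ⊆ U B W₁ ⊆ B W₁ W₁ ⊆ A V`.
-/

theorem Set.exists_maximal_pairwiseDisjoint_subset {α β : Type*} [PartialOrder β] [OrderBot β]
    (A : Set α) (f : α → β) : ∃ B, Maximal (fun B ↦ B ⊆ A ∧ B.PairwiseDisjoint f) B := by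
  refine zorn_subset _ fun c hc hchain ↦ ⟨⋃₀ c, ⟨?_, ?_⟩, fun _ ↦ subset_sUnion_of_mem⟩
  · exact sUnion_subset fun s hs ↦ (hc hs).1
  · exact (hchain.pairwiseDisjoint_sUnion f).2 fun s hs ↦ (hc hs).2

section Group

variable {G : Type*} [Group G]

theorem mem_smul_div_of_not_disjoint_smul {a b : G} {W : Set G}
    (h : ¬Disjoint (a • W) (b • W)) : a ∈ b • (W / W) := by
  obtain ⟨_, ⟨w, hw, rfl⟩, w', hw', hw'w⟩ := not_disjoint_iff.1 h
  refine ⟨w' / w, div_mem_div hw' hw, ?_⟩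
  simp only [smul_eq_mul] at hw'w ⊢
  rw [← mul_div_assoc, hw'w, mul_div_cancel_right]

theorem subset_mul_div_of_maximal_pairwiseDisjoint {A B W : Set G} (hW : (1 : G) ∈ W)
    (hB : Maximal (fun B ↦ B ⊆ A ∧ B.PairwiseDisjoint (· • W)) B) :
    A ⊆ B * (W / W) := by
  intro a ha
  by_cases haB : a ∈ B
  · exact ⟨a, haB, 1, ⟨1, hW, 1, hW, div_one 1⟩, mul_one a⟩
  have hinsert : ¬(insert a B).PairwiseDisjoint (· • W) := fun hdisj ↦
    haB (hB.mem_of_prop_insert ⟨insert_subset ha hB.prop.1, hdisj⟩)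
  obtain ⟨b, hb, -, hab⟩ : ∃ b ∈ B, a ≠ b ∧ ¬Disjoint (a • W) (b • W) := by
    simpa [pairwiseDisjoint_insert, hB.prop.2] using hinsert
  exact smul_set_subset_mul hb (mem_smul_div_of_not_disjoint_smul hab)

end Group

theorem neutral_from_uniformly_discrete
    {G : Type*} [Group G] [TopologicalSpace G] [IsTopologicalGroup G]
    (h : ∀ A : Set G,
      (∃ W ∈ nhds (1 : G), ∀ a ∈ A, ∀ b ∈ A, a ≠ b →
        Disjoint (({a} : Set G) * W) (({b} : Set G) * W)) →
      ∀ V ∈ nhds (1 : G), ∃ U ∈ nhds (1 : G), U * A ⊆ A * V) :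
    ∀ A : Set G, ∀ V ∈ nhds (1 : G), ∃ U ∈ nhds (1 : G), U * A ⊆ A * V := by
  intro A V hV
  obtain ⟨W₁, hW₁, hW₁V⟩ := exists_nhds_one_split hV
  obtain ⟨W, hW, hWW₁⟩ := exists_nhds_split_inv hW₁
  obtain ⟨B, hB⟩ := exists_maximal_pairwiseDisjoint_subset A (· • W)
  have hAB : A ⊆ B * W₁ :=
    (subset_mul_div_of_maximal_pairwiseDisjoint (mem_of_mem_nhds hW) hB).trans
      (mul_subset_mul_left (div_subset_iff.2 hWW₁))
  have hBdiscrete : ∀ a ∈ B, ∀ b ∈ B, a ≠ b → Disjoint (({a} : Set G) * W) (({b} : Set G) * W) :=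
    fun _ ha _ hb hab ↦ by
      simpa only [singleton_mul, ← image_smul, smul_eq_mul] using hB.prop.2 ha hb hab
  obtain ⟨U, hU, hUB⟩ := h B ⟨W, hW, hBdiscrete⟩ W₁ hW₁
  refine ⟨U, hU, ?_⟩
  calc U * A ⊆ U * B * W₁ := (mul_subset_mul_left hAB).trans_eq (mul_assoc _ _ _).symm
    _ ⊆ B * W₁ * W₁ := mul_subset_mul_right hUB
    _ = B * (W₁ * W₁) := mul_assoc _ _ _
    _ ⊆ A * V := mul_subset_mul hB.prop.1 (mul_subset_iff.2 hW₁V)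
end

section
/- If a topological group G is functionally balanced (every bounded right uniformly continuous real function on G is left uniformly continuous) and G is dense in a topological group H, then H is functionally balanced. -/
/-!
Let `f` be bounded and right uniformly continuous on `H`. Its restriction to `G` is again bounded
and right uniformly continuous, hence left uniformly continuous by hypothesis. To compare `f x`
and `f y` for `x⁻¹ * y` near `1`, pick `g, g' ∈ G` close to `x, y` on both sides: closeness on the
right bounds `|f x - f g|` and `|f y - f g'|`, while closeness on the left makes
`g⁻¹ * g' = (g⁻¹ * x) * (x⁻¹ * y) * (y⁻¹ * g')` small, which bounds `|f g - f g'|`.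
-/

open Filter Topology

section UniformContinuity

variable {X : Type*} [Group X] [TopologicalSpace X]

def IsRightUniformlyContinuous (f : X → ℝ) : Prop :=
  ∀ ε > (0 : ℝ), ∃ V ∈ 𝓝 (1 : X), ∀ x y : X, x * y⁻¹ ∈ V → |f x - f y| < ε

def IsLeftUniformlyContinuous (f : X → ℝ) : Prop :=
  ∀ ε > (0 : ℝ), ∃ V ∈ 𝓝 (1 : X), ∀ x y : X, x⁻¹ * y ∈ V → |f x - f y| < ε

theorem IsRightUniformlyContinuous.comp_monoidHom {Y : Type*} [Group Y] [TopologicalSpace Y]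
    {f : Y → ℝ} (hf : IsRightUniformlyContinuous f) (φ : X →* Y) (hφ : Continuous φ) :
    IsRightUniformlyContinuous (f ∘ φ) := by
  intro ε hε
  obtain ⟨V, hV, hfV⟩ := hf ε hε
  refine ⟨φ ⁻¹' V, hφ.tendsto' 1 1 (map_one φ) hV, fun x y hxy => hfV _ _ ?_⟩
  simpa only [Set.mem_preimage, map_mul, map_inv] using hxy

end UniformContinuity

theorem exists_nhds_one_split3 {M : Type*} [Monoid M] [TopologicalSpace M] [ContinuousMul M]
    {s : Set M} (hs : s ∈ 𝓝 (1 : M)) :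
    ∃ V ∈ 𝓝 (1 : M), ∀ u ∈ V, ∀ v ∈ V, ∀ w ∈ V, u * v * w ∈ s := by
  obtain ⟨V, hV, hVs⟩ := exists_nhds_one_split4 hs
  exact ⟨V, hV, fun u hu v hv w hw => by simpa using hVs hu hv hw (mem_of_mem_nhds hV)⟩

theorem IsRightUniformlyContinuous.isLeftUniformlyContinuous_of_dense {H : Type*} [Group H]
    [TopologicalSpace H] [IsTopologicalGroup H] {G : Subgroup H} (hd : Dense (G : Set H))
    {f : H → ℝ} (hR : IsRightUniformlyContinuous f)
    (hL : IsLeftUniformlyContinuous (f ∘ G.subtype)) :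
    IsLeftUniformlyContinuous f := by
  intro ε hε
  obtain ⟨V, hV, hfV⟩ := hL (ε / 3) (by positivity)
  obtain ⟨W, hW, hWV⟩ := (mem_nhds_subtype _ _ _).1 hV
  obtain ⟨W₁, hW₁, hW₁W⟩ := exists_nhds_one_split3 hW
  obtain ⟨U, hU, hfU⟩ := hR (ε / 3) (by positivity)
  have approx (z : H) : ∃ g ∈ (G : Set H), g * z⁻¹ ∈ U ∧ g⁻¹ * z ∈ W₁ ∧ z⁻¹ * g ∈ W₁ :=
    hd.inter_nhds_nonempty <| inter_mem
      ((continuous_mul_const z⁻¹).tendsto' z 1 (mul_inv_cancel z) hU) <| inter_mem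
      ((continuous_inv.mul continuous_const).tendsto' z 1 (inv_mul_cancel z) hW₁)
      ((continuous_const_mul z⁻¹).tendsto' z 1 (inv_mul_cancel z) hW₁)
  refine ⟨W₁, hW₁, fun x y hxy => ?_⟩
  obtain ⟨g, hgG, hgx, hg₁, -⟩ := approx x
  obtain ⟨g', hg'G, hg'y, -, hg'₁⟩ := approx y
  have hgg' : g⁻¹ * g' ∈ W := by simpa [mul_assoc] using hW₁W _ hg₁ _ hxy _ hg'₁
  have hfg : |f g - f g'| < ε / 3 := hfV ⟨g, hgG⟩ ⟨g', hg'G⟩ (hWV (by simpa using hgg'))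
  have hfx : |f g - f x| < ε / 3 := hfU g x hgx
  have hfy : |f g' - f y| < ε / 3 := hfU g' y hg'y
  calc |f x - f y| ≤ |f x - f g| + (|f g - f g'| + |f g' - f y|) :=
        (abs_sub_le _ _ _).trans (by gcongr; exact abs_sub_le _ _ _)
    _ < ε := by rw [abs_sub_comm (f x)]; linarith

theorem functionally_balanced_of_dense_subgroup
    {H : Type*} [Group H] [TopologicalSpace H] [IsTopologicalGroup H]
    (G : Subgroup H) (hd : Dense (G : Set H))
    (hG : ∀ f : G → ℝ, (∃ C : ℝ, ∀ x : G, |f x| ≤ C) →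
      (∀ ε > (0 : ℝ), ∃ V ∈ nhds (1 : G), ∀ x y : G, x * y⁻¹ ∈ V → |f x - f y| < ε) →
      (∀ ε > (0 : ℝ), ∃ V ∈ nhds (1 : G), ∀ x y : G, x⁻¹ * y ∈ V → |f x - f y| < ε)) :
    ∀ f : H → ℝ, (∃ C : ℝ, ∀ x : H, |f x| ≤ C) →
      (∀ ε > (0 : ℝ), ∃ V ∈ nhds (1 : H), ∀ x y : H, x * y⁻¹ ∈ V → |f x - f y| < ε) →
      (∀ ε > (0 : ℝ), ∃ V ∈ nhds (1 : H), ∀ x y : H, x⁻¹ * y ∈ V → |f x - f y| < ε) := by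
  rintro f ⟨C, hC⟩ hR
  have hRG : IsRightUniformlyContinuous (f ∘ G.subtype) :=
    IsRightUniformlyContinuous.comp_monoidHom hR G.subtype continuous_subtype_val
  exact IsRightUniformlyContinuous.isLeftUniformlyContinuous_of_dense hd hR
    (hG _ ⟨C, fun x => hC x⟩ hRG)
end

section
/- Let G be a group acting continuously by isometries on a metric space X, and suppose G is a P-group in the sense that every countable (more generally, every < 𝔪-sized) intersection of open subsets of G is open. Let f : X → ℝ be a Katětov function controlled by a countable set A ⊆ X, i.e., f(x) = inf_{a∈A}(f(a)+d(x,a)). Then for every ε > 0, the set V = { g ∈ G : ∀ a ∈ A, d(a, g·a) < ε } is a neighbourhood of the identity, and for every g ∈ V and every x ∈ X, |f(g⁻¹·x) − f(x)| < 3ε. -/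
/-!
The set `V` is the intersection over the countable set `A` of the open sets
`{g | dist a (g • a) < ε}`, hence open in a P-group. For the estimate, `g⁻¹ • x` and `x` have
distances to each `a ∈ A` differing by at most `dist a (g • a) < ε`, and a function controlled
by `A` moves by at most that much: it is the infimum over `A` of `f a + dist · a`, while
1-Lipschitz continuity bounds `f` below by each term of the infimum. This even gives the bound
`ε` instead of `3 * ε`.
-/

open Set

section Controlled

variable {X : Type*} [PseudoMetricSpace X]

def IsControlledBy (f : X → ℝ) (A : Set X) : Prop :=
  ∀ x : X, f x = ⨅ a : A, (f a + dist x (a : X))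

namespace IsControlledBy

variable {f : X → ℝ} {A : Set X}

/-- For empty `A` the infimum is the junk value `0`, which is why `0 ≤ ε` is needed. -/
theorem le_add_of_forall_dist_le (hfA : IsControlledBy f A) (hf : LipschitzWith 1 f)
    {x y : X} {ε : ℝ} (hε : 0 ≤ ε) (h : ∀ a ∈ A, dist y a ≤ dist x a + ε) :
    f y ≤ f x + ε := by
  rcases isEmpty_or_nonempty A with _ | _
  · rw [hfA x, hfA y, Real.iInf_of_isEmpty, Real.iInf_of_isEmpty]
    linarith
  · rw [hfA x, ← sub_le_iff_le_add]
    refine le_ciInf fun a => ?_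
    have hlip : f y ≤ f a + dist y a := by simpa using hf.le_add_mul y a
    linarith [h a a.2]

theorem abs_sub_le_of_forall_abs_dist_sub_le (hfA : IsControlledBy f A) (hf : LipschitzWith 1 f)
    {x y : X} {ε : ℝ} (hε : 0 ≤ ε) (h : ∀ a ∈ A, |dist y a - dist x a| ≤ ε) :
    |f y - f x| ≤ ε := by
  rw [abs_sub_le_iff]
  constructor
  · linarith [hfA.le_add_of_forall_dist_le hf hε (x := x) (y := y) fun a ha =>
      by linarith [(abs_le.1 (h a ha)).2]]
  · linarith [hfA.le_add_of_forall_dist_le hf hε (x := y) (y := x) fun a ha =>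
      by linarith [(abs_le.1 (h a ha)).1]]

end IsControlledBy

end Controlled

theorem abs_dist_inv_smul_sub_dist_le {G X : Type*} [Group G] [PseudoMetricSpace X] [MulAction G X]
    (hiso : ∀ g : G, Isometry fun y : X => g • y) (g : G) (x a : X) :
    |dist (g⁻¹ • x) a - dist x a| ≤ dist a (g • a) := by
  have hmove : dist (g⁻¹ • x) a = dist x (g • a) := by
    simpa using ((hiso g).dist_eq (g⁻¹ • x) a).symm
  have := abs_dist_sub_le (g • a) a x
  rwa [dist_comm (g • a) x, dist_comm a x, dist_comm (g • a) a, ← hmove] at this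

theorem isOpen_biInter_of_isOpen_sInter {G ι : Type*} [TopologicalSpace G]
    (hP : ∀ S : Set (Set G), S.Countable → (∀ s ∈ S, IsOpen s) → IsOpen (⋂₀ S))
    {I : Set ι} (hI : I.Countable) {U : ι → Set G} (hU : ∀ i ∈ I, IsOpen (U i)) :
    IsOpen (⋂ i ∈ I, U i) := by
  rw [← sInter_image]
  exact hP _ (hI.image U) (forall_mem_image.2 hU)

theorem pgroup_action_on_controlled_katetov_general
    {G X : Type*} [Group G] [TopologicalSpace G]
    [MetricSpace X] [MulAction G X] [ContinuousSMul G X]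
    (hiso : ∀ g : G, Isometry fun y : X => g • y)
    (hP : ∀ S : Set (Set G), S.Countable → (∀ s ∈ S, IsOpen s) → IsOpen (⋂₀ S))
    (A : Set X) (hA : A.Countable)
    (f : X → ℝ) (hfl : LipschitzWith 1 f)
    (hctrl : ∀ x : X, f x = ⨅ a : A, (f a + dist x (a : X))) :
    ∀ ε > (0 : ℝ),
      {g : G | ∀ a ∈ A, dist a (g • a) < ε} ∈ nhds (1 : G) ∧
      ∀ g ∈ {g : G | ∀ a ∈ A, dist a (g • a) < ε}, ∀ x : X,
        |f (g⁻¹ • x) - f x| < 3 * ε := by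
  intro ε hε
  have hV : IsOpen {g : G | ∀ a ∈ A, dist a (g • a) < ε} := by
    simpa only [ofPred_forall] using isOpen_biInter_of_isOpen_sInter hP hA fun a _ =>
      isOpen_lt (by fun_prop : Continuous fun g : G => dist a (g • a)) continuous_const
  refine ⟨hV.mem_nhds fun a _ => by simpa using hε, fun g hg x => ?_⟩
  have hmove : |f (g⁻¹ • x) - f x| ≤ ε :=
    IsControlledBy.abs_sub_le_of_forall_abs_dist_sub_le hctrl hfl hε.le fun a ha =>
      (abs_dist_inv_smul_sub_dist_le hiso g x a).trans (hg a ha).le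
  linarith

theorem pgroup_action_on_controlled_katetov
    {G X : Type*} [Group G] [TopologicalSpace G] [IsTopologicalGroup G]
    [MetricSpace X] [MulAction G X] [ContinuousSMul G X]
    (hiso : ∀ g : G, Isometry fun y : X => g • y)
    (hP : ∀ S : Set (Set G), S.Countable → (∀ s ∈ S, IsOpen s) → IsOpen (⋂₀ S))
    (A : Set X) (hA : A.Countable)
    (f : X → ℝ) (hfl : LipschitzWith 1 f)
    (hfk : ∀ x y : X, dist x y ≤ f x + f y)
    (hctrl : ∀ x : X, f x = ⨅ a : A, (f a + dist x (a : X))) :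
    ∀ ε > (0 : ℝ),
      {g : G | ∀ a ∈ A, dist a (g • a) < ε} ∈ nhds (1 : G) ∧
      ∀ g ∈ {g : G | ∀ a ∈ A, dist a (g • a) < ε}, ∀ x : X,
        |f (g⁻¹ • x) - f x| < 3 * ε :=
  pgroup_action_on_controlled_katetov_general hiso hP A hA f hfl hctrl
end

section
/- Let G be a group acting by isometries on a metric space X, let x ∈ X, ε > 0, and let A ⊆ G. Suppose z ∈ X satisfies: d(g·x, z) = D − ε for all g ∈ A, and d(g·x, z) ≥ D whenever g ∈ G and g·x ∉ ⋃_{a∈A} B(ε, a·x). Then for every w ∈ G with d(z, w·z) < ε/3 and every a ∈ A, there exists b ∈ A with d(w·a·x, b·x) < ε. -/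
theorem orbit_neighbourhood_return {G X : Type*} [Group G] [MetricSpace X]
    [MulAction G X] (hiso : ∀ g : G, Isometry fun y : X => g • y)
    (x : X) (ε D : ℝ) (hε : 0 < ε) (A : Set G) (z : X)
    (h1 : ∀ g ∈ A, dist (g • x) z = D - ε)
    (h2 : ∀ g : G, (∀ a ∈ A, g • x ∉ Metric.ball (a • x) ε) → D ≤ dist (g • x) z) :
    ∀ w : G, dist z (w • z) < ε / 3 → ∀ a ∈ A,
      ∃ b ∈ A, dist ((w * a) • x) (b • x) < ε := by
  intro w hw a ha
  by_contra h
  push_neg at h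
  have h2' := h2 (w * a) (by
    intro b hb
    simp only [Metric.mem_ball]
    exact not_lt.mpr (h b hb))
  have hiso' : dist ((w * a) • x) (w • z) = D - ε := by
    rw [mul_smul, (hiso w).dist_eq]
    exact h1 a ha
  have := dist_triangle ((w * a) • x) (w • z) z
  rw [hiso', dist_comm (w • z) z] at this
  linarith
end
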